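/- Fix ω ∈ ℝ. For every x < 0, the hypergeometric series ₂F₁(1, 1−iω; 2−iω; −eˣ) = Σ_{n=0}^{∞} [(1)ₙ (1−iω)ₙ / ((2−iω)ₙ · n!)] (−eˣ)ⁿ converges, and the function G(x) = (i e^{(1−iω)x}/(ω+i)) · ₂F₁(1, 1−iω; 2−iω; −eˣ) is differentiable on (−∞, 0) with derivative G′(x) = e^{(1−iω)x}/(eˣ + 1), i.e., G is an antiderivative of the Fourier integrand S(x)e^{-iωx} of the Sigmoid function S(x) = eˣ/(eˣ+1). -/

import Mathlib

open Complex

/-- The Pochhammer (ascending factorial) symbol `(a)ₙ = a(a+1)⋯(a+n-1)` in `ℂ`. -/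
noncomputable def pochhammerC (a : ℂ) (n : ℕ) : ℂ := (ascPochhammer ℂ n).eval a

/-- The `n`-th term of the Gauss hypergeometric series
`₂F₁(1, 1-iω; 2-iω; z) = Σₙ (1)ₙ(1-iω)ₙ zⁿ / ((2-iω)ₙ n!)`. -/
noncomputable def sigmoidHyperTerm (ω : ℝ) (z : ℂ) (n : ℕ) : ℂ :=
  pochhammerC 1 n * pochhammerC (1 - Complex.I * ω) n
    / (pochhammerC (2 - Complex.I * ω) n * (Nat.factorial n)) * z ^ n

/-!
With `a = 1 - iω`, the shift identity `(a)ₙ (a + n) = a (a + 1)ₙ` collapses the `n`-th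
coefficient of `₂F₁(1, a; a + 1; z)` to `a / (a + n)`, and since `i a = ω + i` the function `G`
is the series `Σ (-1)ⁿ e^{(a+n)x} / (a + n)`. On `(-∞, x/2)` its termwise derivatives are
dominated by a geometric series, so it may be differentiated termwise, giving the geometric
series `Σ (-1)ⁿ e^{(a+n)x} = e^{ax} / (eˣ + 1)`.
-/

open Nat Set

lemma pochhammerC_mul_add_natCast (a : ℂ) (n : ℕ) :
    pochhammerC a n * (a + n) = a * pochhammerC (a + 1) n := by
  simpa [pochhammerC, Polynomial.eval_comp] using
    congrArg (Polynomial.eval a)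
      ((ascPochhammer_succ_right (S := ℂ) n).symm.trans (ascPochhammer_succ_left (S := ℂ) n))

lemma re_le_norm_add_natCast (a : ℂ) (n : ℕ) : a.re ≤ ‖a + n‖ := by
  simpa using (le_add_of_nonneg_right n.cast_nonneg).trans (re_le_norm (a + n))

lemma add_natCast_ne_zero_of_re_pos {a : ℂ} (ha : 0 < a.re) (n : ℕ) : a + n ≠ 0 :=
  norm_pos_iff.mp (ha.trans_le (re_le_norm_add_natCast a n))

lemma pochhammerC_ne_zero_of_re_pos {a : ℂ} (ha : 0 < a.re) (n : ℕ) :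
    pochhammerC a n ≠ 0 := by
  induction n with
  | zero => simp [pochhammerC]
  | succ n ih =>
    rw [pochhammerC, ascPochhammer_succ_eval]
    exact mul_ne_zero ih (add_natCast_ne_zero_of_re_pos ha n)

lemma pochhammerC_one_mul_div_eq {a : ℂ} (ha : 0 < a.re) (n : ℕ) :
    pochhammerC 1 n * pochhammerC a n / (pochhammerC (a + 1) n * n !) = a / (a + n) := by
  have hP : pochhammerC (a + 1) n ≠ 0 :=
    pochhammerC_ne_zero_of_re_pos (by simpa using ha.trans (lt_add_one a.re)) n
  rw [show pochhammerC 1 n = n ! from ascPochhammer_eval_one ℂ n,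
    div_eq_div_iff (mul_ne_zero hP (mod_cast n.factorial_ne_zero))
      (add_natCast_ne_zero_of_re_pos ha n)]
  linear_combination (n ! : ℂ) * pochhammerC_mul_add_natCast a n

lemma sigmoidHyperTerm_eq (ω : ℝ) (z : ℂ) (n : ℕ) :
    sigmoidHyperTerm ω z n = (1 - I * ω) / (1 - I * ω + n) * z ^ n := by
  rw [sigmoidHyperTerm, show (2 : ℂ) - I * ω = 1 - I * ω + 1 by ring,
    pochhammerC_one_mul_div_eq (by simp)]

lemma summable_div_add_natCast_mul_pow {a z : ℂ} (ha : 0 < a.re) (hz : ‖z‖ < 1) :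
    Summable fun n : ℕ => a / (a + n) * z ^ n := by
  refine .of_norm_bounded ((summable_geometric_of_lt_one (norm_nonneg z) hz).mul_left
    (‖a‖ / a.re)) fun n => ?_
  rw [norm_mul, norm_div, norm_pow]
  gcongr
  exact re_le_norm_add_natCast a n

lemma norm_neg_cexp_ofReal_lt_one {x : ℝ} (hx : x < 0) : ‖-exp (x : ℂ)‖ < 1 := by
  simpa [norm_exp] using hx

lemma cexp_mul_mul_neg_cexp_pow (a : ℂ) (t : ℝ) (n : ℕ) :
    exp (a * t) * (-exp t) ^ n = (-1) ^ n * exp ((a + n) * t) := by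
  rw [neg_pow, ← exp_nat_mul, mul_left_comm, ← exp_add]
  ring_nf

lemma hasSum_neg_one_pow_mul_cexp (a : ℂ) {x : ℝ} (hx : x < 0) :
    HasSum (fun n : ℕ => (-1) ^ n * exp ((a + n) * x)) (exp (a * x) / (exp x + 1)) := by
  have := (hasSum_geometric_of_norm_lt_one (norm_neg_cexp_ofReal_lt_one hx)).mul_left
    (exp (a * x))
  simp_rw [cexp_mul_mul_neg_cexp_pow] at this
  simpa [div_eq_mul_inv, add_comm] using this

lemma hasDerivAt_const_mul_cexp_div {a : ℂ} (ha : a ≠ 0) (c : ℂ) (t : ℝ) :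
    HasDerivAt (fun s : ℝ => c * exp (a * s) / a) (c * exp (a * t)) t := by
  have := (((hasDerivAt_id' (t : ℂ)).const_mul a).cexp.const_mul c).div_const a
  convert this.comp_ofReal using 1
  field_simp

lemma norm_neg_one_pow_mul_cexp (a : ℂ) (n : ℕ) (t : ℝ) :
    ‖(-1) ^ n * exp ((a + n) * t)‖ = Real.exp ((a.re + n) * t) := by
  simp [norm_exp]

lemma hasDerivAt_tsum_neg_one_pow_mul_cexp_div {a : ℂ} (ha : 0 < a.re) {x : ℝ} (hx : x < 0) :
    HasDerivAt (fun t : ℝ => ∑' n : ℕ, (-1) ^ n * exp ((a + n) * t) / (a + n))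
      (exp (a * x) / (exp x + 1)) x := by
  have hx₂ : x ∈ Iio (x / 2) := mem_Iio.mpr (by linarith)
  have hbound : ∀ (n : ℕ), ∀ t ∈ Iio (x / 2),
      ‖(-1) ^ n * exp ((a + n) * t)‖ ≤ Real.exp ((a.re + n) * (x / 2)) := by
    intro n t ht
    rw [norm_neg_one_pow_mul_cexp]
    gcongr
    exact (mem_Iio.mp ht).le
  have hu : Summable fun n : ℕ => Real.exp ((a.re + n) * (x / 2)) := by
    refine ((summable_geometric_of_lt_one (Real.exp_pos (x / 2)).le
      (Real.exp_lt_one_iff.mpr (by linarith))).mul_left (Real.exp (a.re * (x / 2)))).congr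
      fun n => ?_
    rw [← Real.exp_nat_mul, ← Real.exp_add]
    ring_nf
  have hsum : Summable fun n : ℕ => (-1) ^ n * exp ((a + n) * x) / (a + n) := by
    refine .of_norm_bounded (hu.div_const a.re) fun n => ?_
    rw [norm_div]
    exact div_le_div₀ (Real.exp_pos _).le (hbound n x hx₂) ha (re_le_norm_add_natCast a n)
  rw [← (hasSum_neg_one_pow_mul_cexp a hx).tsum_eq]
  exact hasDerivAt_tsum_of_isPreconnected hu isOpen_Iio isPreconnected_Iio
    (fun n t _ => hasDerivAt_const_mul_cexp_div (add_natCast_ne_zero_of_re_pos ha n) _ t)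
    hbound hx₂ hsum hx₂

lemma I_mul_cexp_div_mul_tsum_sigmoidHyperTerm (ω t : ℝ) :
    I * exp ((1 - I * ω) * t) / (ω + I) * ∑' n, sigmoidHyperTerm ω (-exp t) n
      = ∑' n : ℕ, (-1) ^ n * exp ((1 - I * ω + n) * t) / (1 - I * ω + n) := by
  rw [← tsum_mul_left]
  refine tsum_congr fun n => ?_
  have hωI : (ω : ℂ) + I ≠ 0 := fun h => by simpa using congrArg im h
  rw [sigmoidHyperTerm_eq, ← cexp_mul_mul_neg_cexp_pow]
  have hc := add_natCast_ne_zero_of_re_pos (a := 1 - I * ω) (by simp) n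
  field_simp
  linear_combination (-ω : ℂ) * I_sq

/-- **Fourier transform of the Sigmoid (paper Thm 3.3).** For fixed `ω ∈ ℝ` and
`x < 0` the hypergeometric series `₂F₁(1, 1-iω; 2-iω; -eˣ)` converges, and
`G(x) = (i e^{(1-iω)x}/(ω+i)) · ₂F₁(1, 1-iω; 2-iω; -eˣ)` is differentiable on
`(-∞, 0)` with derivative `e^{(1-iω)x}/(eˣ+1)`, the Fourier integrand
`S(x) e^{-iωx}` of the Sigmoid `S(x) = eˣ/(eˣ+1)`. -/
theorem sigmoid_fourier_antideriv (ω : ℝ) :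
    ∀ x : ℝ, x < 0 →
      Summable (fun n => sigmoidHyperTerm ω (-Complex.exp x) n)
        ∧ HasDerivAt
            (fun t : ℝ =>
              Complex.I * Complex.exp ((1 - Complex.I * ω) * t) / (ω + Complex.I)
                * ∑' n, sigmoidHyperTerm ω (-Complex.exp t) n)
            (Complex.exp ((1 - Complex.I * ω) * x) / (Complex.exp x + 1)) x := by
  intro x hx
  have ha : 0 < (1 - I * ω).re := by simp
  constructor
  · simp_rw [sigmoidHyperTerm_eq]
    exact summable_div_add_natCast_mul_pow ha (norm_neg_cexp_ofReal_lt_one hx)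
  · simp_rw [I_mul_cexp_div_mul_tsum_sigmoidHyperTerm]
    exact hasDerivAt_tsum_neg_one_pow_mul_cexp_div ha hx
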